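/- arXiv:1805.09661 — 5 statements merged into one kernel-verified Lean document; each statement's English description precedes it below -/
import Mathlib

section
/- Let G be a connected simple graph on n ≥ 11 vertices with independence number α(G) ≤ 2. Then λ₂(D(G)) < t(G), where t(G) is the number of triangles in G. -/
open Finset SimpleGraph

/-- The distance matrix of a simple graph on `Fin n`, as a real matrix: the
`(i,j)` entry is the graph distance `d_G(i,j)`. -/
noncomputable def distMatrix {n : ℕ} (G : SimpleGraph (Fin n)) :
    Matrix (Fin n) (Fin n) ℝ :=
  fun i j => (G.dist i j : ℝ)

/-- The eigenvalues of the distance matrix, listed in decreasing order. -/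
noncomputable def distEigList {n : ℕ} (G : SimpleGraph (Fin n)) : List ℝ :=
  if h : (distMatrix G).IsHermitian then
    (List.ofFn h.eigenvalues).insertionSort (· ≥ ·)
  else []

/-- `distEig G k` is the `k`-th largest distance eigenvalue `λ_k(D(G))` (`1`-indexed). -/
noncomputable def distEig {n : ℕ} (G : SimpleGraph (Fin n)) (k : ℕ) : ℝ :=
  (distEigList G).getD (k - 1) 0

/-- `S_k(D(G))`, the sum of the `k` largest distance eigenvalues. -/
noncomputable def distEigSum {n : ℕ} (G : SimpleGraph (Fin n)) (k : ℕ) : ℝ :=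
  ((distEigList G).take k).sum

/-- `G` has independence number at most `s`: every set of pairwise
nonadjacent vertices has at most `s` elements. -/
def IndepNumLE {V : Type*} (G : SimpleGraph V) (s : ℕ) : Prop :=
  ∀ S : Finset V, (∀ u ∈ S, ∀ v ∈ S, u ≠ v → ¬ G.Adj u v) → S.card ≤ s

/-!
With `α(G) ≤ 2`, three vertices at pairwise distance `≥ 2` cannot exist, so `G` has diameter at
most `3` and every off-diagonal entry of `D(G)` lies in `[1, 3]`. On the hyperplane `𝟙^⊥` the
quadratic form of `D(G)` then equals that of `D(G) - 2J`, whose entries are bounded by `1` off the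
diagonal and equal `-2` on it, so it is at most `(n - 3)‖w‖²`. A two-dimensional space of
eigenvectors always meets `𝟙^⊥`, hence at most one eigenvalue exceeds `n - 3` and
`λ₂(D(G)) ≤ n - 3`. On the other side, `R(3,3) = 6` puts a triangle in every `6`-set of vertices;
double counting gives `20 t(G) ≥ C(n,3) > 20 (n - 3)` for `n ≥ 11`.
-/

open Matrix

section Spectral

variable {ι : Type*} [Fintype ι]

lemma Matrix.dotProduct_mulVec_le_of_sum_eq_zero {M : Matrix ι ι ℝ} {c r : ℝ}
    (hdiag : ∀ i, M i i = 0) (hoff : ∀ i j, i ≠ j → |M i j - c| ≤ r)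
    {w : ι → ℝ} (hw : ∑ i, w i = 0) :
    w ⬝ᵥ M *ᵥ w ≤ ((Fintype.card ι - 1) * r - c) * (w ⬝ᵥ w) := by
  classical
  have hshift : w ⬝ᵥ M *ᵥ w = ∑ i, ∑ j, (M i j - c) * w i * w j := by
    have : ∑ i, ∑ j, c * w i * w j = 0 := by
      simp only [mul_assoc, ← mul_sum, hw, mul_zero, sum_const_zero]
    simp only [dotProduct, mulVec, sub_mul, sum_sub_distrib, this, sub_zero, mul_sum]
    exact sum_congr rfl fun i _ => sum_congr rfl fun j _ => by ring
  have hterm : ∀ i j, (M i j - c) * w i * w j ≤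
      r * (w i ^ 2 + w j ^ 2) / 2 - if i = j then (r + c) * w i ^ 2 else 0 := by
    intro i j
    by_cases hij : i = j
    · subst hij
      rw [hdiag, if_pos rfl]
      exact le_of_eq (by ring)
    · have hr := hoff i j hij
      have hamgm : 2 * |w i * w j| ≤ w i ^ 2 + w j ^ 2 := by
        simpa [abs_mul, mul_assoc] using two_mul_le_add_sq |w i| |w j|
      rw [if_neg hij, sub_zero]
      calc (M i j - c) * w i * w j ≤ |M i j - c| * |w i * w j| := by
            rw [mul_assoc, ← abs_mul]; exact le_abs_self _
        _ ≤ r * |w i * w j| := mul_le_mul_of_nonneg_right hr (abs_nonneg _)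
        _ ≤ r * (w i ^ 2 + w j ^ 2) / 2 := by nlinarith [(abs_nonneg _).trans hr]
  calc w ⬝ᵥ M *ᵥ w
      ≤ ∑ i, ∑ j, (r * (w i ^ 2 + w j ^ 2) / 2 - if i = j then (r + c) * w i ^ 2 else 0) := by
        rw [hshift]
        exact sum_le_sum fun i _ => sum_le_sum fun j _ => hterm i j
    _ = ((Fintype.card ι - 1) * r - c) * (w ⬝ᵥ w) := by
      simp only [sum_sub_distrib, sum_ite_eq, mem_univ, if_true, mul_add, add_div,
        sum_add_distrib, sum_const, card_univ, dotProduct, ← sum_div, ← mul_sum, nsmul_eq_mul,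
        ← pow_two]
      ring

variable [DecidableEq ι]

lemma Matrix.IsHermitian.eigenvectorBasis_dotProduct {A : Matrix ι ι ℝ} (hA : A.IsHermitian)
    (i j : ι) :
    ⇑(hA.eigenvectorBasis i) ⬝ᵥ ⇑(hA.eigenvectorBasis j) = if i = j then 1 else 0 := by
  rw [← orthonormal_iff_ite.1 hA.eigenvectorBasis.orthonormal i j,
    EuclideanSpace.inner_eq_star_dotProduct, star_trivial, dotProduct_comm]

lemma Matrix.IsHermitian.eigenvalues_le_or_eigenvalues_le {A : Matrix ι ι ℝ}
    (hA : A.IsHermitian) (v : ι → ℝ) {μ : ℝ}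
    (hQ : ∀ w, v ⬝ᵥ w = 0 → w ⬝ᵥ A *ᵥ w ≤ μ * (w ⬝ᵥ w)) {i j : ι} (hij : i ≠ j) :
    hA.eigenvalues i ≤ μ ∨ hA.eigenvalues j ≤ μ := by
  set x : ι → ℝ := ⇑(hA.eigenvectorBasis i)
  set y : ι → ℝ := ⇑(hA.eigenvectorBasis j)
  have hxx : x ⬝ᵥ x = 1 := by simpa using hA.eigenvectorBasis_dotProduct i i
  have hyy : y ⬝ᵥ y = 1 := by simpa using hA.eigenvectorBasis_dotProduct j j
  have hxy : x ⬝ᵥ y = 0 := by simpa [hij] using hA.eigenvectorBasis_dotProduct i j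
  obtain ⟨a, b, hv, hab⟩ :
      ∃ a b : ℝ, a * (v ⬝ᵥ x) + b * (v ⬝ᵥ y) = 0 ∧ 0 < a ^ 2 + b ^ 2 := by
    by_cases h : v ⬝ᵥ x = 0
    · exact ⟨1, 0, by simp [h], by norm_num⟩
    · exact ⟨v ⬝ᵥ y, -(v ⬝ᵥ x), by ring,
        add_pos_of_nonneg_of_pos (sq_nonneg _) (sq_pos_of_ne_zero (neg_ne_zero.2 h))⟩
  have hw := hQ (a • x + b • y) (by simpa [dotProduct_add, dotProduct_smul] using hv)
  simp only [mulVec_add, mulVec_smul, x, y, hA.mulVec_eigenvectorBasis, dotProduct_add,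
    add_dotProduct, dotProduct_smul, smul_dotProduct] at hw
  rw [dotProduct_comm y x, hxx, hyy, hxy] at hw
  simp only [smul_eq_mul, mul_one, mul_zero, add_zero, zero_add] at hw
  by_contra! h
  rcases le_total (hA.eigenvalues i) (hA.eigenvalues j) with hle | hle
  · nlinarith [mul_pos (sub_pos.2 h.1) hab, mul_le_mul_of_nonneg_right hle (sq_nonneg b)]
  · nlinarith [mul_pos (sub_pos.2 h.2) hab, mul_le_mul_of_nonneg_right hle (sq_nonneg a)]

end Spectral

lemma List.getD_one_le_of_countP_le_one {α : Type*} [LinearOrder α] {L : List α} {μ d : α}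
    (hL : L.Pairwise (· ≥ ·)) (hlen : 2 ≤ L.length) (hc : L.countP (fun x => μ < x) ≤ 1) :
    L.getD 1 d ≤ μ := by
  match L, hlen with
  | x :: y :: t, _ =>
    show y ≤ μ
    by_contra! hy
    have hx : μ < x := hy.trans_le ((List.pairwise_cons.1 hL).1 y (by simp))
    simp [hx, hy] at hc

lemma card_filter_superset_powersetCard_le {α : Type*} [Fintype α] [DecidableEq α]
    (T : Finset α) (k : ℕ) :
    #{s ∈ powersetCard k univ | T ⊆ s} ≤ (Fintype.card α - #T).choose (k - #T) := by
  rw [← card_univ, ← card_sdiff_of_subset (subset_univ T), ← card_powersetCard]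
  refine card_le_card_of_injOn (· \ T) (fun s hs => ?_) (fun s₁ hs₁ s₂ hs₂ heq => ?_)
  · rw [mem_coe, mem_filter, mem_powersetCard] at hs
    rw [mem_coe, mem_powersetCard]
    exact ⟨sdiff_subset_sdiff hs.1.1 le_rfl, by rw [card_sdiff_of_subset hs.2, hs.1.2]⟩
  · rw [mem_coe, mem_filter] at hs₁ hs₂
    rw [← sdiff_union_of_subset hs₁.2, ← sdiff_union_of_subset hs₂.2]
    exact congrArg (· ∪ T) heq

lemma Nat.twenty_mul_sub_three_lt_choose_three {n : ℕ} (hn : 11 ≤ n) :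
    20 * (n - 3) < n.choose 3 := by
  obtain ⟨m, rfl⟩ : ∃ m, n = m + 11 := ⟨n - 11, by omega⟩
  have h := Nat.descFactorial_eq_factorial_mul_choose (m + 11) 3
  norm_num [Nat.descFactorial, Nat.factorial] at h
  rw [show m + 11 - 2 = m + 9 by omega] at h
  rw [show m + 11 - 3 = m + 8 by omega]
  nlinarith [Nat.zero_le (m * m * m), Nat.zero_le (m * m)]

namespace SimpleGraph

variable {V : Type*} {G : SimpleGraph V}

lemma cliqueFree_compl_of_indepNumLE {s : ℕ} (h : IndepNumLE G s) : Gᶜ.CliqueFree (s + 1) := by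
  intro t ht
  have := h t fun u hu v hv huv => ((G.compl_adj u v).1 (ht.isClique hu hv huv)).2
  rw [ht.card_eq] at this
  omega

lemma compl_adj_of_two_le_dist {u v : V} (h : 2 ≤ G.dist u v) : Gᶜ.Adj u v := by
  refine (G.compl_adj u v).2 ⟨?_, fun hadj => ?_⟩
  · rintro rfl
    simp at h
  · rw [dist_eq_one_iff_adj.2 hadj] at h
    omega

/-- On a shortest path `u = x₀, x₁, …` of length `≥ 4`, the vertices `u, x₂, v` are pairwise at
distance `≥ 2`. -/
lemma dist_le_three_of_cliqueFree_compl (h : Gᶜ.CliqueFree 3) (u v : V) : G.dist u v ≤ 3 := by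
  classical
  by_contra! huv
  obtain ⟨p, hp⟩ :=
    (Reachable.of_dist_ne_zero (by omega : G.dist u v ≠ 0)).exists_walk_length_eq_dist
  have hux : G.dist u (p.getVert 2) ≤ 2 :=
    (dist_le (p.take 2)).trans (by simp [Walk.take_length])
  have hxv : G.dist (p.getVert 2) v ≤ G.dist u v - 2 :=
    (dist_le (p.drop 2)).trans (by simp [Walk.drop_length, hp])
  have := (p.take 2).reachable.dist_triangle_left v
  refine h {u, p.getVert 2, v} (is3Clique_triple_iff.2 ⟨?_, ?_, ?_⟩) <;>
    apply compl_adj_of_two_le_dist <;> omega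

lemma exists_triangle_or_compl_triangle_of_forall_adj [DecidableEq V] {v : V} {t : Finset V}
    (ht : #t = 3) (hadj : ∀ x ∈ t, G.Adj v x) :
    ∃ T ⊆ insert v t, G.IsNClique 3 T ∨ Gᶜ.IsNClique 3 T := by
  obtain ⟨x, y, z, hxy, hxz, hyz, rfl⟩ := card_eq_three.1 ht
  have hvx := hadj x (by simp)
  have hvy := hadj y (by simp)
  have hvz := hadj z (by simp)
  by_cases h₁ : G.Adj x y
  · exact ⟨{v, x, y}, by grind, .inl (is3Clique_triple_iff.2 ⟨hvx, hvy, h₁⟩)⟩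
  by_cases h₂ : G.Adj x z
  · exact ⟨{v, x, z}, by grind, .inl (is3Clique_triple_iff.2 ⟨hvx, hvz, h₂⟩)⟩
  by_cases h₃ : G.Adj y z
  · exact ⟨{v, y, z}, by grind, .inl (is3Clique_triple_iff.2 ⟨hvy, hvz, h₃⟩)⟩
  exact ⟨{x, y, z}, subset_insert _ _, .inr (is3Clique_triple_iff.2
    ⟨(G.compl_adj _ _).2 ⟨hxy, h₁⟩, (G.compl_adj _ _).2 ⟨hxz, h₂⟩,
      (G.compl_adj _ _).2 ⟨hyz, h₃⟩⟩)⟩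

lemma exists_triangle_or_compl_triangle_of_six_le_card [DecidableEq V] {s : Finset V}
    (hs : 6 ≤ #s) : ∃ T ⊆ s, G.IsNClique 3 T ∨ Gᶜ.IsNClique 3 T := by
  classical
  obtain ⟨v, hv⟩ : s.Nonempty := card_pos.1 (by omega)
  have hsplit : #{x ∈ s.erase v | G.Adj v x} + #{x ∈ s.erase v | ¬G.Adj v x} = #s - 1 := by
    rw [card_filter_add_card_filter_not, card_erase_of_mem hv]
  obtain ⟨H, hH, t, hts, htcard, htadj⟩ : ∃ H : SimpleGraph V, (H = G ∨ H = Gᶜ) ∧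
      ∃ t ⊆ s.erase v, #t = 3 ∧ ∀ x ∈ t, H.Adj v x := by
    by_cases h : 3 ≤ #{x ∈ s.erase v | G.Adj v x}
    · obtain ⟨t, hts, htcard⟩ := exists_subset_card_eq h
      exact ⟨G, .inl rfl, t, hts.trans (filter_subset _ _), htcard,
        fun x hx => (mem_filter.1 (hts hx)).2⟩
    · obtain ⟨t, hts, htcard⟩ :=
        exists_subset_card_eq (show 3 ≤ #{x ∈ s.erase v | ¬G.Adj v x} by omega)
      refine ⟨Gᶜ, .inr rfl, t, hts.trans (filter_subset _ _), htcard, fun x hx => ?_⟩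
      obtain ⟨hx, hnadj⟩ := mem_filter.1 (hts hx)
      exact (G.compl_adj v x).2 ⟨(ne_of_mem_erase hx).symm, hnadj⟩
  obtain ⟨T, hT, hcl⟩ := exists_triangle_or_compl_triangle_of_forall_adj htcard htadj
  have hTs : T ⊆ s := hT.trans (insert_subset hv (hts.trans (erase_subset _ _)))
  rcases hH with rfl | rfl
  · exact ⟨T, hTs, hcl⟩
  · exact ⟨T, hTs, by rwa [compl_compl, or_comm] at hcl⟩

lemma choose_three_le_twenty_mul_card_cliqueFinset [Fintype V] [DecidableEq V]
    [DecidableRel G.Adj] (hV : 6 ≤ Fintype.card V) (h : Gᶜ.CliqueFree 3) :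
    (Fintype.card V).choose 3 ≤ 20 * #(G.cliqueFinset 3) := by
  have hcount : #(powersetCard 6 (univ : Finset V)) * 1 ≤
      #(G.cliqueFinset 3) * (Fintype.card V - 3).choose 3 := by
    refine card_mul_le_card_mul (fun s T => T ⊆ s) (fun s hs => ?_) (fun T hT => ?_)
    · obtain ⟨T, hTs, hT⟩ :=
        exists_triangle_or_compl_triangle_of_six_le_card (G := G) (mem_powersetCard.1 hs).2.ge
      exact one_le_card.2 ⟨T, mem_filter.2 ⟨mem_cliqueFinset_iff.2 (hT.resolve_right (h T)), hTs⟩⟩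
    · have h3 := (mem_cliqueFinset_iff.1 hT).card_eq
      rw [bipartiteBelow]
      simpa [h3] using card_filter_superset_powersetCard_le T 6
  -- `C(n,6) C(6,3) = C(n,3) C(n-3,3)`
  have hchoose := Nat.choose_mul (n := Fintype.card V) (k := 6) (s := 3) (by norm_num)
  rw [show Nat.choose 6 3 = 20 from rfl] at hchoose
  rw [card_powersetCard, card_univ, mul_one] at hcount
  refine Nat.le_of_mul_le_mul_right (c := (Fintype.card V - 3).choose 3) ?_
    (Nat.choose_pos (by omega))
  nlinarith

end SimpleGraph

section DistanceMatrix

variable {n : ℕ} {G : SimpleGraph (Fin n)}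

lemma isHermitian_distMatrix (G : SimpleGraph (Fin n)) : (distMatrix G).IsHermitian := by
  ext i j
  simp [distMatrix, SimpleGraph.dist_comm]

lemma distEig_two_le_of_card_lt_le_one (hn : 2 ≤ n) {μ : ℝ}
    (hc : #{i | μ < (isHermitian_distMatrix G).eigenvalues i} ≤ 1) : distEig G 2 ≤ μ := by
  have hlist : distEigList G =
      (List.ofFn (isHermitian_distMatrix G).eigenvalues).insertionSort (· ≥ ·) :=
    dif_pos (isHermitian_distMatrix G)
  refine List.getD_one_le_of_countP_le_one ?_ ?_ ?_
  · rw [hlist]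
    exact List.pairwise_insertionSort _ _
  · simpa [hlist] using hn
  · rw [hlist, (List.perm_insertionSort _ _).countP_eq, ← Multiset.coe_countP,
      ← Fin.univ_val_map, Multiset.countP_map, ← Finset.filter_val, ← Finset.card_def]
    exact hc

lemma abs_distMatrix_sub_two_le (hG : G.Connected) (h : Gᶜ.CliqueFree 3) {i j : Fin n}
    (hij : i ≠ j) : |distMatrix G i j - 2| ≤ 1 := by
  have h₁ : (1 : ℝ) ≤ G.dist i j := by exact_mod_cast hG.pos_dist_of_ne hij
  have h₃ : (G.dist i j : ℝ) ≤ 3 := by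
    exact_mod_cast SimpleGraph.dist_le_three_of_cliqueFree_compl h i j
  rw [abs_le, distMatrix]
  constructor <;> linarith

lemma distEig_two_le_sub_three (hn : 2 ≤ n) (hG : G.Connected) (h : Gᶜ.CliqueFree 3) :
    distEig G 2 ≤ n - 3 := by
  refine distEig_two_le_of_card_lt_le_one hn (card_le_one.2 fun i hi j hj => ?_)
  by_contra hij
  have hQ (w : Fin n → ℝ) (hw : 1 ⬝ᵥ w = 0) :
      w ⬝ᵥ distMatrix G *ᵥ w ≤ (n - 3) * (w ⬝ᵥ w) := by
    have := dotProduct_mulVec_le_of_sum_eq_zero (M := distMatrix G)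
      (fun i => by simp [distMatrix]) (fun i j hij => abs_distMatrix_sub_two_le hG h hij) (by rwa [one_dotProduct] at hw)
    rw [Fintype.card_fin] at this
    convert this using 2
    ring
  rw [mem_filter] at hi hj
  rcases (isHermitian_distMatrix G).eigenvalues_le_or_eigenvalues_le 1 hQ hij with h' | h'
  · exact (not_le.2 hi.2) h'
  · exact (not_le.2 hj.2) h'

end DistanceMatrix

theorem second_largest_distance_eigenvalue_lt_triangle_count {n : ℕ}
    (hn : 11 ≤ n) (G : SimpleGraph (Fin n)) [DecidableRel G.Adj]
    (hG : G.Connected) (hα : IndepNumLE G 2) :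
    distEig G 2 < ((G.cliqueFinset 3).card : ℝ) := by
  have hfree : Gᶜ.CliqueFree 3 := SimpleGraph.cliqueFree_compl_of_indepNumLE hα
  have hcount : n.choose 3 ≤ 20 * #(G.cliqueFinset 3) := by
    simpa using SimpleGraph.choose_three_le_twenty_mul_card_cliqueFinset
      (by simpa using (by omega : 6 ≤ n)) hfree
  have htri : n - 3 < #(G.cliqueFinset 3) := by
    have := Nat.twenty_mul_sub_three_lt_choose_three hn
    omega
  have htri' : (n : ℝ) - 3 < #(G.cliqueFinset 3) := by
    have : ((n - 3 : ℕ) : ℝ) < #(G.cliqueFinset 3) := by exact_mod_cast htri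
    rwa [Nat.cast_sub (by omega), Nat.cast_ofNat] at this
  exact (distEig_two_le_sub_three (by omega) hG hfree).trans_lt htri'
end

section
/- For every integer k ≥ 2 there exists an integer N (depending on k) such that for all n ≥ N the following holds: if G is a connected simple graph on n vertices with diameter d satisfying d < 2n/(3(k+2)), then S_k(D(G)) < S_k(D(P_n)), where P_n is the path on n vertices. -/
open Finset SimpleGraph

/-!
Upper bound: by Cauchy–Schwarz, `S_k(D(G)) ≤ √k · (∑ λᵢ²)^{1/2} = √k · ‖D(G)‖_F ≤ √k · n · d`.
Lower bound for the path: Ky Fan's principle `S_k(A) ≥ tr(Wᵀ A W)` for `W` with orthonormal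
columns, tested on the normalized all-ones vector, with Rayleigh quotient
`(∑_{u,v} d(u,v))/n = (n² - 1)/3`, and on `k - 1` normalized differences `e_u - e_v` along
disjoint edges, each with Rayleigh quotient `-1`. Since `√k ≤ (k + 1)/2`, the hypothesis
`d < 2n/(3(k+2))` makes the upper bound smaller than `(n² - 1)/3 - (k - 1)` once `n ≥ 3(k+2)`.
-/

open Matrix

lemma List.sq_sum_le_length_mul_sum_sq (L : List ℝ) :
    L.sum ^ 2 ≤ L.length * (L.map (· ^ 2)).sum := by
  conv_lhs => rw [← List.ofFn_getElem (xs := L)]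
  conv_rhs => rw [← List.ofFn_getElem (xs := L)]
  rw [List.map_ofFn, List.sum_ofFn, List.sum_ofFn]
  simpa using sq_sum_le_card_mul_sum_sq (s := univ) (f := fun i : Fin L.length => L[i])

lemma List.sum_map_sub_const (L : List ℝ) (t : ℝ) :
    (L.map (· - t)).sum = L.sum - L.length * t := by
  induction L with
  | nil => simp
  | cons x L ih => simp only [List.map_cons, List.sum_cons, ih, List.length_cons]; push_cast; ring

lemma List.Pairwise.exists_separator_take_drop {L : List ℝ} (hL : L.Pairwise (· ≥ ·))
    (k : ℕ) :
    ∃ t, (∀ x ∈ L.take k, t ≤ x) ∧ ∀ y ∈ L.drop k, y ≤ t := by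
  rw [← List.take_append_drop k L, List.pairwise_append] at hL
  obtain ⟨-, hdrop, hsep⟩ := hL
  cases hd : L.drop k with
  | nil =>
    obtain ⟨t, ht⟩ := (L.take k).toFinset.bddBelow
    exact ⟨t, fun x hx => ht (by simpa using hx), by simp⟩
  | cons y ys =>
    rw [hd, List.pairwise_cons] at hdrop
    refine ⟨y, fun x hx => hsep x hx y (by simp [hd]), fun z hz => ?_⟩
    rcases List.mem_cons.mp hz with rfl | hz
    · exact le_rfl
    · exact hdrop.1 z hz

noncomputable def sumLargest {n : ℕ} (f : Fin n → ℝ) (k : ℕ) : ℝ :=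
  (((List.ofFn f).insertionSort (· ≥ ·)).take k).sum

section SumLargest

variable {n : ℕ} (f : Fin n → ℝ)

lemma sum_map_insertionSort_ofFn (g : ℝ → ℝ) :
    (((List.ofFn f).insertionSort (· ≥ ·)).map g).sum = ∑ i, g (f i) := by
  rw [((List.perm_insertionSort _ _).map g).sum_eq, List.map_ofFn, List.sum_ofFn]
  rfl

lemma sq_sumLargest_le (k : ℕ) : sumLargest f k ^ 2 ≤ k * ∑ i, f i ^ 2 := by
  set L := (List.ofFn f).insertionSort (· ≥ ·)
  have hsq : ∀ l : List ℝ, ∀ x ∈ l.map (· ^ 2), 0 ≤ x := fun l x hx => by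
    obtain ⟨y, -, rfl⟩ := List.mem_map.1 hx
    positivity
  calc sumLargest f k ^ 2 ≤ (L.take k).length * ((L.take k).map (· ^ 2)).sum :=
        List.sq_sum_le_length_mul_sum_sq _
    _ ≤ k * ((L.take k).map (· ^ 2)).sum := by
        gcongr
        · exact List.sum_nonneg (hsq _)
        · exact List.length_take_le k L
    _ ≤ k * (L.map (· ^ 2)).sum := by
        gcongr
        exact ((List.take_sublist k L).map _).sum_le_sum (hsq L)
    _ = k * ∑ i, f i ^ 2 := by rw [sum_map_insertionSort_ofFn]

lemma sumLargest_le_sqrt (k : ℕ) : sumLargest f k ≤ √(k * ∑ i, f i ^ 2) :=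
  (le_abs_self _).trans (Real.abs_le_sqrt (sq_sumLargest_le f k))

lemma sum_mul_le_sumLargest {k : ℕ} (c : Fin n → ℝ) (hc : ∀ i, c i ∈ Set.Icc 0 1)
    (hsum : ∑ i, c i = k) : ∑ i, f i * c i ≤ sumLargest f k := by
  have hkn : k ≤ n := by
    have : (k : ℝ) ≤ n :=
      hsum ▸ (sum_le_card_nsmul univ c 1 fun i _ => (hc i).2).trans (by simp)
    exact_mod_cast this
  obtain ⟨t, htake, hdrop⟩ :=
    (List.pairwise_insertionSort _ (List.ofFn f)).exists_separator_take_drop k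
  set L := (List.ofFn f).insertionSort (· ≥ ·)
  -- `∑ max (f i - t) 0` does not depend on the order of the values, and on the sorted list it is
  -- the sum of the first `k` entries minus `k t`.
  have hpos : ∑ i, max (f i - t) 0 = (L.take k).sum - k * t := by
    rw [← sum_map_insertionSort_ofFn f (fun x => max (x - t) 0)]
    change (L.map _).sum = _
    conv_lhs => rw [← List.take_append_drop k L]
    have htake' : (L.take k).map (fun x => max (x - t) 0) = (L.take k).map (· - t) :=
      List.map_congr_left fun x hx => max_eq_left (sub_nonneg.2 (htake x hx))
    have hdrop' : ((L.drop k).map (fun x => max (x - t) 0)).sum = 0 :=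
      List.sum_eq_zero fun x hx => by
        obtain ⟨y, hy, rfl⟩ := List.mem_map.1 hx
        exact max_eq_right (sub_nonpos.2 (hdrop y hy))
    rw [List.map_append, List.sum_append, htake', hdrop', List.sum_map_sub_const]
    simp [L, hkn]
  calc ∑ i, f i * c i = ∑ i, (f i - t) * c i + t * ∑ i, c i := by
        rw [mul_sum, ← sum_add_distrib]; exact sum_congr rfl fun i _ => by ring
    _ ≤ ∑ i, max (f i - t) 0 + t * k := by
        rw [hsum]
        gcongr with i
        obtain ⟨h0, h1⟩ := hc i
        rcases le_total t (f i) with h | h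
        · exact le_max_of_le_left (by nlinarith)
        · exact le_max_of_le_right (by nlinarith)
    _ = sumLargest f k := by rw [hpos, sumLargest]; ring

end SumLargest

namespace Matrix

variable {m n : Type*} [Fintype m] [Fintype n]

lemma IsHermitian.exists_orthogonal_diagonalization [DecidableEq m] {A : Matrix m m ℝ}
    (hA : A.IsHermitian) :
    ∃ U : Matrix m m ℝ,
      Uᵀ * U = 1 ∧ U * Uᵀ = 1 ∧ A = U * diagonal hA.eigenvalues * Uᵀ := by
  have hU := hA.eigenvectorUnitary.2
  refine ⟨hA.eigenvectorUnitary, ?_, ?_, ?_⟩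
  · simpa [star_eq_conjTranspose, conjTranspose_eq_transpose_of_trivial]
      using mem_unitaryGroup_iff'.mp hU
  · simpa [star_eq_conjTranspose, conjTranspose_eq_transpose_of_trivial]
      using mem_unitaryGroup_iff.mp hU
  · conv_lhs => rw [hA.spectral_theorem]
    simp [star_eq_conjTranspose, conjTranspose_eq_transpose_of_trivial]

lemma trace_transpose_mul_diagonal_mul [DecidableEq m] (M : Matrix m n ℝ) (d : m → ℝ) :
    (Mᵀ * diagonal d * M).trace = ∑ i, d i * (M * Mᵀ) i i := by
  simp only [trace, diag, mul_apply, diagonal_apply, transpose_apply, mul_ite, mul_zero,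
    sum_ite_eq', mem_univ, if_true, mul_sum]
  rw [sum_comm]
  exact sum_congr rfl fun i _ => sum_congr rfl fun j _ => by ring

lemma trace_mul_transpose_of_transpose_mul_eq_one [DecidableEq n] {M : Matrix m n ℝ}
    (hM : Mᵀ * M = 1) : (M * Mᵀ).trace = Fintype.card n := by
  rw [trace_mul_comm, hM, trace_one]

lemma diag_mul_transpose_mem_Icc [DecidableEq n] {M : Matrix m n ℝ} (hM : Mᵀ * M = 1) (i : m) :
    (M * Mᵀ) i i ∈ Set.Icc 0 1 := by
  set P := M * Mᵀ
  have hP : P i i = ∑ j, P i j ^ 2 := by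
    have hidem : P * P = P := by
      rw [Matrix.mul_assoc, ← Matrix.mul_assoc Mᵀ, hM, Matrix.one_mul]
    have hsymm : Pᵀ = P := by simp [P, transpose_mul]
    conv_lhs => rw [← hidem, mul_apply]
    refine sum_congr rfl fun j _ => ?_
    rw [← congrArg (· j i) hsymm, transpose_apply, sq]
  have hnonneg : 0 ≤ P i i := hP ▸ sum_nonneg fun j _ => sq_nonneg _
  have hsq : P i i ^ 2 ≤ P i i := hP ▸ single_le_sum (fun j _ => sq_nonneg (P i j)) (mem_univ i)
  exact ⟨hnonneg, by nlinarith⟩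

lemma IsHermitian.sum_eigenvalues_sq [DecidableEq m] {A : Matrix m m ℝ} (hA : A.IsHermitian) :
    ∑ i, hA.eigenvalues i ^ 2 = ∑ i, ∑ j, A i j ^ 2 := by
  obtain ⟨U, hUU, -, hAU⟩ := hA.exists_orthogonal_diagonalization
  have hAA : A * A = Uᵀᵀ * diagonal (fun i => hA.eigenvalues i ^ 2) * Uᵀ := by
    simp only [transpose_transpose, sq, ← diagonal_mul_diagonal]
    conv_lhs => rw [hAU]
    simp only [Matrix.mul_assoc]
    rw [← Matrix.mul_assoc Uᵀ, hUU, Matrix.one_mul]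
  calc ∑ i, hA.eigenvalues i ^ 2 = (A * A).trace := by
        rw [hAA, trace_transpose_mul_diagonal_mul, transpose_transpose, hUU]
        simp
    _ = ∑ i, ∑ j, A i j ^ 2 := by
        simp only [trace, diag, mul_apply, sq]
        refine sum_congr rfl fun i _ => sum_congr rfl fun j _ => ?_
        rw [(isHermitian_iff_isSymm.mp hA).apply i j]

end Matrix

theorem Matrix.IsHermitian.trace_transpose_mul_mul_le_sumLargest {n k : ℕ}
    {A : Matrix (Fin n) (Fin n) ℝ} (hA : A.IsHermitian) {W : Matrix (Fin n) (Fin k) ℝ}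
    (hW : Wᵀ * W = 1) : (Wᵀ * A * W).trace ≤ sumLargest hA.eigenvalues k := by
  obtain ⟨U, -, hUU', hAU⟩ := hA.exists_orthogonal_diagonalization
  set M := Uᵀ * W
  have hM : Mᵀ * M = 1 := by
    rw [transpose_mul, transpose_transpose, Matrix.mul_assoc,
      ← Matrix.mul_assoc U, hUU', Matrix.one_mul, hW]
  have hWAW : Wᵀ * A * W = Mᵀ * diagonal hA.eigenvalues * M := by
    conv_lhs => rw [hAU]
    simp only [M, transpose_mul, transpose_transpose, Matrix.mul_assoc]
  rw [hWAW, Matrix.trace_transpose_mul_diagonal_mul]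
  refine sum_mul_le_sumLargest _ _ (Matrix.diag_mul_transpose_mem_Icc hM) ?_
  simpa [trace] using Matrix.trace_mul_transpose_of_transpose_mul_eq_one hM

theorem Matrix.IsHermitian.sum_dotProduct_mulVec_le_sumLargest {n k : ℕ}
    {A : Matrix (Fin n) (Fin n) ℝ} (hA : A.IsHermitian) {v : Fin k → Fin n → ℝ}
    (hv : ∀ i j, v i ⬝ᵥ v j = if i = j then 1 else 0) :
    ∑ j, v j ⬝ᵥ A *ᵥ v j ≤ sumLargest hA.eigenvalues k := by
  have hW : (of v)ᵀᵀ * (of v)ᵀ = 1 := by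
    ext i j
    rw [transpose_transpose, one_apply, ← hv]
    rfl
  convert hA.trace_transpose_mul_mul_le_sumLargest hW using 1
  simp only [trace, Matrix.diag, dotProduct_mulVec]
  rfl

section DistanceMatrix

variable {n : ℕ} (G : SimpleGraph (Fin n))

lemma distMatrix_isHermitian : (distMatrix G).IsHermitian := by
  ext i j
  simp [distMatrix, SimpleGraph.dist_comm]

lemma distEigSum_eq_sumLargest (k : ℕ) :
    distEigSum G k = sumLargest (distMatrix_isHermitian G).eigenvalues k := by
  rw [distEigSum, distEigList, dif_pos (distMatrix_isHermitian G), sumLargest]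

lemma distEigSum_le_sqrt_mul_diam (hG : G.Connected) (k : ℕ) :
    distEigSum G k ≤ √k * (n * G.diam) := by
  have : Nonempty (Fin n) := hG.nonempty
  have hentry : ∀ i j, distMatrix G i j ^ 2 ≤ (G.diam : ℝ) ^ 2 := fun i j => by
    have := G.dist_le_diam (G.connected_iff_ediam_ne_top.mp hG) (u := i) (v := j)
    unfold distMatrix
    gcongr
  have hfrob : ∑ i, ∑ j, distMatrix G i j ^ 2 ≤ (n * G.diam : ℝ) ^ 2 := by
    calc ∑ i, ∑ j, distMatrix G i j ^ 2
          ≤ ∑ _i : Fin n, ∑ _j : Fin n, (G.diam : ℝ) ^ 2 :=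
          sum_le_sum fun i _ => sum_le_sum fun j _ => hentry i j
      _ = (n * G.diam : ℝ) ^ 2 := by simp; ring
  rw [distEigSum_eq_sumLargest]
  calc _ ≤ √(k * ∑ i, (distMatrix_isHermitian G).eigenvalues i ^ 2) := sumLargest_le_sqrt _ k
    _ ≤ √(k * (n * G.diam : ℝ) ^ 2) := by
        rw [Matrix.IsHermitian.sum_eigenvalues_sq]
        gcongr
    _ = √k * (n * G.diam) := by
        rw [Real.sqrt_mul (Nat.cast_nonneg k), Real.sqrt_sq (by positivity)]

end DistanceMatrix

lemma single_sub_single_dotProduct_distMatrix_mulVec {n : ℕ} {G : SimpleGraph (Fin n)}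
    {u v : Fin n} (h : G.Adj u v) :
    (Pi.single u 1 - Pi.single v 1) ⬝ᵥ distMatrix G *ᵥ (Pi.single u 1 - Pi.single v 1) =
      -2 := by
  have huv : G.dist u v = 1 := SimpleGraph.dist_eq_one_iff_adj.mpr h
  simp only [mulVec_sub, mulVec_single_one, sub_dotProduct, dotProduct_sub, single_dotProduct,
    col_apply, distMatrix, SimpleGraph.dist_self, SimpleGraph.dist_comm (u := v), huv]
  norm_num

lemma le_distEigSum_of_matching {n m : ℕ} (hn : 0 < n) (G : SimpleGraph (Fin n))
    {a b : Fin m → Fin n} (ha : a.Injective) (hb : b.Injective) (hab : ∀ i j, a i ≠ b j)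
    (hadj : ∀ j, G.Adj (a j) (b j)) :
    (∑ u, ∑ v, (G.dist u v : ℝ)) / n - m ≤ distEigSum G (m + 1) := by
  set c : Fin n → ℝ := fun _ => (√n)⁻¹
  set e : Fin m → Fin n → ℝ := fun j =>
    (√2)⁻¹ • (Pi.single (a j) 1 - Pi.single (b j) 1)
  set v : Fin (m + 1) → Fin n → ℝ := Fin.cons c e
  have hsqrt_n : (√n)⁻¹ * (√n)⁻¹ = (n : ℝ)⁻¹ := by
    rw [← mul_inv, Real.mul_self_sqrt (Nat.cast_nonneg n)]
  have hsqrt_2 : (√2)⁻¹ * (√2)⁻¹ = (2 : ℝ)⁻¹ := by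
    rw [← mul_inv, Real.mul_self_sqrt zero_le_two]
  have hcc : c ⬝ᵥ c = 1 := by
    simp only [c, dotProduct, hsqrt_n, sum_const, card_univ, Fintype.card_fin, nsmul_eq_mul]
    field_simp
  have hce : ∀ j, c ⬝ᵥ e j = 0 := fun j => by
    simp [c, e, dotProduct_sub]
  have hee : ∀ i j, e i ⬝ᵥ e j = if i = j then 1 else 0 := fun i j => by
    simp only [e, smul_dotProduct, dotProduct_smul, sub_dotProduct, dotProduct_sub,
      single_dotProduct, Pi.single_apply, ha.eq_iff, hb.eq_iff, if_neg (hab _ _),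
      if_neg (hab _ _).symm]
    split_ifs <;> simp
    linear_combination 2 * hsqrt_2
  have hv : ∀ i j, v i ⬝ᵥ v j = if i = j then 1 else 0 := by
    intro i j
    cases i using Fin.cases <;> cases j using Fin.cases <;>
      simp [v, hcc, hce, hee, dotProduct_comm _ c, (Fin.succ_ne_zero _).symm]
  have hc : c ⬝ᵥ distMatrix G *ᵥ c = (∑ u, ∑ v, (G.dist u v : ℝ)) / n := by
    simp only [c, distMatrix, dotProduct, mulVec, mul_sum, div_eq_inv_mul, ← hsqrt_n]
    exact sum_congr rfl fun i _ => sum_congr rfl fun j _ => by ring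
  have he : ∀ j, e j ⬝ᵥ distMatrix G *ᵥ e j = -1 := fun j => by
    simp only [e, mulVec_smul, smul_dotProduct, dotProduct_smul,
      single_sub_single_dotProduct_distMatrix_mulVec (hadj j), smul_eq_mul]
    linear_combination -2 * hsqrt_2
  have hkyfan := (distMatrix_isHermitian G).sum_dotProduct_mulVec_le_sumLargest hv
  simp only [Fin.sum_univ_succ, v, Fin.cons_zero, Fin.cons_succ, hc, he, sum_const, card_univ,
    Fintype.card_fin, nsmul_eq_mul, mul_neg, mul_one] at hkyfan
  rw [distEigSum_eq_sumLargest]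
  linarith

lemma sum_range_natDist (m : ℕ) : ∑ j ∈ range m, (Nat.dist m j : ℝ) = m * (m + 1) / 2 := by
  induction m with
  | zero => simp
  | succ m ih =>
    have hstep : ∀ j ∈ range m, (Nat.dist (m + 1) j : ℝ) = Nat.dist m j + 1 := fun j hj => by
      have := mem_range.mp hj
      norm_cast
      simp only [Nat.dist]
      omega
    rw [sum_range_succ, sum_congr rfl hstep, sum_add_distrib, ih]
    simp [Nat.dist]
    ring

lemma sum_range_sum_range_natDist (n : ℕ) :
    ∑ i ∈ range n, ∑ j ∈ range n, (Nat.dist i j : ℝ) = ((n : ℝ) ^ 3 - n) / 3 := by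
  induction n with
  | zero => simp
  | succ m ih =>
    simp only [sum_range_succ, sum_add_distrib, ih, Nat.dist_self, Nat.cast_zero, add_zero]
    simp only [Nat.dist_comm _ m, sum_range_natDist]
    push_cast
    ring

lemma natDist_le_length_of_pathGraph_walk {n : ℕ} {u v : Fin n}
    (p : (pathGraph n).Walk u v) : Nat.dist u v ≤ p.length := by
  induction p with
  | nil => simp
  | @cons x y z h q ih =>
    have hxy : Nat.dist x y = 1 := by
      rcases pathGraph_adj.mp h with h | h <;> simp only [Nat.dist] <;> omega
    calc Nat.dist x z ≤ Nat.dist x y + Nat.dist y z := Nat.dist.triangle_inequality _ _ _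
      _ ≤ (q.cons h).length := by rw [Walk.length_cons]; omega

lemma natDist_le_pathGraph_dist {n : ℕ} (u v : Fin n) :
    Nat.dist u v ≤ (pathGraph n).dist u v := by
  obtain ⟨m, rfl⟩ := Nat.exists_eq_succ_of_ne_zero u.pos.ne'
  obtain ⟨p, hp⟩ := ((pathGraph_connected m).preconnected u v).exists_walk_length_eq_dist
  exact hp ▸ natDist_le_length_of_pathGraph_walk p

lemma le_sum_sum_dist_pathGraph (n : ℕ) :
    ((n : ℝ) ^ 3 - n) / 3 ≤ ∑ u, ∑ v, ((pathGraph n).dist u v : ℝ) := by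
  rw [← sum_range_sum_range_natDist]
  simp only [← Fin.sum_univ_eq_sum_range]
  gcongr with u _ v _
  exact_mod_cast natDist_le_pathGraph_dist u v

lemma le_distEigSum_pathGraph {n m : ℕ} (hm : 2 * m < n) :
    ((n : ℝ) ^ 2 - 1) / 3 - m ≤ distEigSum (pathGraph n) (m + 1) := by
  have hn : 0 < n := by omega
  let a : Fin m → Fin n := fun j => ⟨2 * j, by omega⟩
  let b : Fin m → Fin n := fun j => ⟨2 * j + 1, by omega⟩
  have hmatch := le_distEigSum_of_matching hn (pathGraph n) (a := a) (b := b)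
    (fun i j h => by simpa [a, Fin.ext_iff] using h)
    (fun i j h => by simpa [b, Fin.ext_iff] using h)
    (fun i j h => by simp [a, b, Fin.ext_iff] at h; omega)
    (fun j => pathGraph_adj.mpr (Or.inl rfl))
  have hwiener :
      ((n : ℝ) ^ 2 - 1) / 3 ≤ (∑ u, ∑ v, ((pathGraph n).dist u v : ℝ)) / n := by
    rw [le_div_iff₀ (by positivity)]
    linarith [le_sum_sum_dist_pathGraph n]
  linarith

lemma sqrt_mul_mul_lt_of_lt_div {k n d : ℝ} (hk : 2 ≤ k) (hn : 3 * (k + 2) ≤ n)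
    (hd : d < 2 * n / (3 * (k + 2))) : √k * (n * d) < (n ^ 2 - 1) / 3 - (k - 1) := by
  have hsqrt : √k ≤ (k + 1) / 2 := Real.sqrt_le_iff.mpr ⟨by linarith, by nlinarith⟩
  have hpos : 0 < 3 * (k + 2) := by linarith
  have hn0 : 0 < n := by linarith
  calc √k * (n * d) < √k * (n * (2 * n / (3 * (k + 2)))) :=
        mul_lt_mul_of_pos_left (mul_lt_mul_of_pos_left hd hn0) (Real.sqrt_pos.mpr (by linarith))
    _ ≤ (k + 1) / 2 * (n * (2 * n / (3 * (k + 2)))) :=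
        mul_le_mul_of_nonneg_right hsqrt (mul_pos hn0 (div_pos (by linarith) hpos)).le
    _ = (k + 1) * n ^ 2 / (3 * (k + 2)) := by field_simp
    _ ≤ (n ^ 2 - 1) / 3 - (k - 1) := by
        rw [div_le_iff₀ hpos]
        nlinarith

theorem sum_k_largest_distance_eigenvalues_lt_path :
    ∀ k : ℕ, 2 ≤ k → ∃ N : ℕ, ∀ n : ℕ, N ≤ n →
      ∀ G : SimpleGraph (Fin n), G.Connected →
        (G.diam : ℝ) < 2 * (n : ℝ) / (3 * ((k : ℝ) + 2)) →
        distEigSum G k < distEigSum (pathGraph n) k := by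
  intro k hk
  refine ⟨3 * (k + 2), fun n hn G hG hdiam => ?_⟩
  obtain ⟨m, rfl⟩ : ∃ m, k = m + 1 := ⟨k - 1, by omega⟩
  have hk' : (2 : ℝ) ≤ (m + 1 : ℕ) := by exact_mod_cast hk
  have hn' : 3 * (((m + 1 : ℕ) : ℝ) + 2) ≤ n := by exact_mod_cast hn
  calc distEigSum G (m + 1)
      ≤ √(m + 1 : ℕ) * (n * G.diam) := distEigSum_le_sqrt_mul_diam G hG _
    _ < ((n : ℝ) ^ 2 - 1) / 3 - (((m + 1 : ℕ) : ℝ) - 1) :=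
        sqrt_mul_mul_lt_of_lt_div hk' hn' hdiam
    _ = ((n : ℝ) ^ 2 - 1) / 3 - m := by push_cast; ring
    _ ≤ distEigSum (pathGraph n) (m + 1) := le_distEigSum_pathGraph (by omega)
end

section
/- Let G be a simple graph with independence number α(G) ≤ s, where s ≥ 1, and let u be a vertex of G with degree d(u). Then the number t(G,u) of triangles of G containing u satisfies t(G,u) ≥ (d(u)² − s·d(u))/(2s). -/
open Finset SimpleGraph

/-- Core Turán-type bound: any set `N` of vertices in a graph with independence
number at most `s` spans at least `(#N^2 - s * #N) / s` ordered adjacent pairs. -/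
lemma ordered_edges_lower_bound {n s : ℕ} (hs : 1 ≤ s)
    (G : SimpleGraph (Fin n)) [DecidableRel G.Adj] (hα : IndepNumLE G s) :
    ∀ N : Finset (Fin n),
      N.card ^ 2 ≤ s * ((N ×ˢ N).filter fun p => G.Adj p.1 p.2).card + s * N.card := by
  intro N
  induction N using Finset.strongInduction with
  | _ N ih =>
  rcases N.eq_empty_or_nonempty with rfl | ⟨v, hv⟩
  · simp
  -- family of independent subsets of N
  set fam : Finset (Finset (Fin n)) :=
    N.powerset.filter (fun I => ∀ a ∈ I, ∀ b ∈ I, a ≠ b → ¬ G.Adj a b) with hfam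
  have hvfam : ({v} : Finset (Fin n)) ∈ fam := by
    simp [hfam, Finset.singleton_subset_iff, hv]
  obtain ⟨I, hIfam, hImax⟩ := Finset.exists_max_image fam Finset.card ⟨_, hvfam⟩
  rw [hfam, Finset.mem_filter, Finset.mem_powerset] at hIfam
  obtain ⟨hIN, hIind⟩ := hIfam
  have hIs : I.card ≤ s := hα I hIind
  have hIpos : 1 ≤ I.card := by
    have := hImax _ hvfam
    simpa using this
  -- every vertex of N \ I has a neighbor in I
  have hnbr : ∀ v' ∈ N \ I, ∃ w ∈ I, G.Adj v' w := by
    intro v' hv'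
    rw [Finset.mem_sdiff] at hv'
    by_contra hno
    push_neg at hno
    have hins : insert v' I ∈ fam := by
      rw [hfam, Finset.mem_filter, Finset.mem_powerset]
      refine ⟨Finset.insert_subset hv'.1 hIN, ?_⟩
      intro a ha b hb hab hadj
      by_cases hav : a = v'
      · subst hav
        have hb' : b ∈ I := by
          rcases Finset.mem_insert.1 hb with h | h
          · exact absurd h (Ne.symm hab)
          · exact h
        exact hno b hb' hadj
      · have ha' : a ∈ I := by
          rcases Finset.mem_insert.1 ha with h | h
          · exact absurd h hav
          · exact h
        by_cases hbv : b = v'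
        · subst hbv
          exact hno a ha' hadj.symm
        · have hb' : b ∈ I := by
            rcases Finset.mem_insert.1 hb with h | h
            · exact absurd h hbv
            · exact h
          exact hIind a ha' b hb' hab hadj
    have := hImax _ hins
    rw [Finset.card_insert_of_notMem hv'.2] at this
    omega
  set M : Finset (Fin n) := N \ I with hM
  have hMN : M ⊂ N := by
    refine Finset.sdiff_ssubset ?_ ?_
    · exact hIN
    · exact Finset.card_pos.1 hIpos
  -- the three disjoint pieces
  set EM : Finset (Fin n × Fin n) := (M ×ˢ M).filter (fun p => G.Adj p.1 p.2) with hEM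
  set C : Finset (Fin n × Fin n) := (M ×ˢ I).filter (fun p => G.Adj p.1 p.2) with hC
  set C' : Finset (Fin n × Fin n) := (I ×ˢ M).filter (fun p => G.Adj p.1 p.2) with hC'
  have hMC : M.card ≤ C.card := by
    apply Finset.card_le_card_of_surjOn Prod.fst
    intro x hx
    obtain ⟨w, hw, hadj⟩ := hnbr x (Finset.mem_coe.1 hx)
    exact ⟨(x, w), by simp [hC, Finset.mem_product, Finset.mem_coe.1 hx, hw, hadj], rfl⟩
  have hMC' : M.card ≤ C'.card := by
    apply Finset.card_le_card_of_surjOn Prod.snd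
    intro x hx
    obtain ⟨w, hw, hadj⟩ := hnbr x (Finset.mem_coe.1 hx)
    exact ⟨(w, x), by simp [hC', Finset.mem_product, Finset.mem_coe.1 hx, hw, hadj.symm], rfl⟩
  have hdisj1 : Disjoint EM C := by
    rw [Finset.disjoint_left]
    intro p hp hp'
    rw [hEM, Finset.mem_filter, Finset.mem_product] at hp
    rw [hC, Finset.mem_filter, Finset.mem_product] at hp'
    have h1 := hp.1.2
    have h2 := hp'.1.2
    rw [hM, Finset.mem_sdiff] at h1
    exact h1.2 h2
  have hdisj2 : Disjoint (EM ∪ C) C' := by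
    rw [Finset.disjoint_left]
    intro p hp hp'
    rw [hC', Finset.mem_filter, Finset.mem_product] at hp'
    have h2 := hp'.1.1
    rcases Finset.mem_union.1 hp with hp | hp
    · rw [hEM, Finset.mem_filter, Finset.mem_product] at hp
      have h1 := hp.1.1
      rw [hM, Finset.mem_sdiff] at h1
      exact h1.2 h2
    · rw [hC, Finset.mem_filter, Finset.mem_product] at hp
      have h1 := hp.1.1
      rw [hM, Finset.mem_sdiff] at h1
      exact h1.2 h2
  have hsub : EM ∪ C ∪ C' ⊆ (N ×ˢ N).filter (fun p => G.Adj p.1 p.2) := by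
    intro p hp
    have hMsub : M ⊆ N := Finset.sdiff_subset
    rcases Finset.mem_union.1 hp with hp | hp
    · rcases Finset.mem_union.1 hp with hp | hp
      · rw [hEM, Finset.mem_filter, Finset.mem_product] at hp
        rw [Finset.mem_filter, Finset.mem_product]
        exact ⟨⟨hMsub hp.1.1, hMsub hp.1.2⟩, hp.2⟩
      · rw [hC, Finset.mem_filter, Finset.mem_product] at hp
        rw [Finset.mem_filter, Finset.mem_product]
        exact ⟨⟨hMsub hp.1.1, hIN hp.1.2⟩, hp.2⟩
    · rw [hC', Finset.mem_filter, Finset.mem_product] at hp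
      rw [Finset.mem_filter, Finset.mem_product]
      exact ⟨⟨hIN hp.1.1, hMsub hp.1.2⟩, hp.2⟩
  have hcard : EM.card + C.card + C'.card ≤
      ((N ×ˢ N).filter fun p => G.Adj p.1 p.2).card := by
    calc EM.card + C.card + C'.card = (EM ∪ C ∪ C').card := by
          rw [Finset.card_union_of_disjoint hdisj2, Finset.card_union_of_disjoint hdisj1]
      _ ≤ _ := Finset.card_le_card hsub
  have hIH := ih M hMN
  have hcards : M.card + I.card = N.card := Finset.card_sdiff_add_card_eq_card hIN
  -- now pure arithmetic
  set m := M.card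
  set i := I.card
  set eN := ((N ×ˢ N).filter fun p => G.Adj p.1 p.2).card
  set eM := EM.card
  have h1 : eM + m + m ≤ eN := by
    have := hcard
    omega
  nlinarith [hIH, hcards, hIs, hIpos, h1, Nat.mul_le_mul_left s h1,
    Nat.mul_le_mul_right m hIs, Nat.mul_le_mul_right i hIs]

theorem local_triangle_count_lower_bound {n s : ℕ} (hs : 1 ≤ s)
    (G : SimpleGraph (Fin n)) [DecidableRel G.Adj] (hα : IndepNumLE G s)
    (u : Fin n) :
    ((((G.cliqueFinset 3).filter (fun S => u ∈ S)).card : ℝ)) ≥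
      ((G.degree u : ℝ) ^ 2 - (s : ℝ) * (G.degree u : ℝ)) / (2 * s) := by
  classical
  set N := G.neighborFinset u with hN
  set E : Finset (Fin n × Fin n) := (N ×ˢ N).filter (fun p => G.Adj p.1 p.2) with hE
  set T := (G.cliqueFinset 3).filter (fun S => u ∈ S) with hT
  have hEbound : N.card ^ 2 ≤ s * E.card + s * N.card :=
    ordered_edges_lower_bound hs G hα N
  -- map an ordered adjacent pair in N to a triangle containing u
  set φ : Fin n × Fin n → Finset (Fin n) := fun p => {u, p.1, p.2} with hφ
  have himg : E.image φ ⊆ T := by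
    intro a ha
    obtain ⟨p, hp, rfl⟩ := Finset.mem_image.1 ha
    rw [hE, Finset.mem_filter, Finset.mem_product] at hp
    obtain ⟨⟨h1, h2⟩, h3⟩ := hp
    rw [hN, SimpleGraph.mem_neighborFinset] at h1 h2
    rw [hT, Finset.mem_filter, SimpleGraph.mem_cliqueFinset_iff]
    refine ⟨SimpleGraph.is3Clique_triple_iff.2 ⟨h1, h2, h3⟩, by simp [hφ]⟩
  have hfiber : ∀ a ∈ E.image φ, (E.filter (fun p => φ p = a)).card ≤ 2 := by
    intro a ha
    obtain ⟨q, hq, rfl⟩ := Finset.mem_image.1 ha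
    have hsub : E.filter (fun p => φ p = φ q) ⊆ ((φ q).erase u).offDiag := by
      intro p hp
      rw [Finset.mem_filter] at hp
      obtain ⟨hpE, hpeq⟩ := hp
      rw [hE, Finset.mem_filter, Finset.mem_product] at hpE
      obtain ⟨⟨h1, h2⟩, h3⟩ := hpE
      rw [hN, SimpleGraph.mem_neighborFinset] at h1 h2
      have hu1 : p.1 ≠ u := (G.ne_of_adj h1).symm
      have hu2 : p.2 ≠ u := (G.ne_of_adj h2).symm
      rw [Finset.mem_offDiag]
      have hm1 : p.1 ∈ (φ q).erase u := by
        rw [Finset.mem_erase, ← hpeq]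
        exact ⟨hu1, by simp [hφ]⟩
      have hm2 : p.2 ∈ (φ q).erase u := by
        rw [Finset.mem_erase, ← hpeq]
        exact ⟨hu2, by simp [hφ]⟩
      exact ⟨hm1, hm2, G.ne_of_adj h3⟩
    have hcard2 : ((φ q).erase u).offDiag.card ≤ 2 := by
      have hc : ((φ q).erase u).card ≤ 2 := by
        have h3 : (φ q).card ≤ 3 := by
          rw [hφ]
          apply le_trans (Finset.card_insert_le _ _)
          apply Nat.succ_le_succ
          apply le_trans (Finset.card_insert_le _ _)
          simp
        rw [Finset.card_erase_of_mem (by simp [hφ])]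
        omega
      rw [Finset.offDiag_card]
      have : ((φ q).erase u).card * ((φ q).erase u).card ≤ 2 * ((φ q).erase u).card :=
        Nat.mul_le_mul_right _ hc
      omega
    exact le_trans (Finset.card_le_card hsub) hcard2
  have hE2T : E.card ≤ 2 * T.card := by
    calc E.card ≤ 2 * (E.image φ).card := Finset.card_le_mul_card_image E 2 hfiber
      _ ≤ 2 * T.card := by
          exact Nat.mul_le_mul_left 2 (Finset.card_le_card himg)
  have hdeg : G.degree u = N.card := (G.card_neighborFinset_eq_degree u).symm
  have hspos : (0:ℝ) < s := by exact_mod_cast hs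
  rw [ge_iff_le, div_le_iff₀ (by positivity)]
  have key : (N.card : ℝ) ^ 2 ≤ s * E.card + s * N.card := by exact_mod_cast hEbound
  have key2 : (E.card : ℝ) ≤ 2 * T.card := by exact_mod_cast hE2T
  rw [hdeg]
  nlinarith [key, key2, hspos]
end

section
/- Let G be a simple graph on n vertices with m edges and independence number α(G) ≤ s, where s ≥ 1. Then 3·t(G) ≥ (Σ_{u ∈ V(G)} d(u)²)/(2s) − m, where the sum is over all vertices u of G, d(u) is the degree of u, and t(G) is the number of triangles in G. -/
open Finset SimpleGraph

lemma turan_key {n : ℕ} (G : SimpleGraph (Fin n)) [DecidableRel G.Adj] :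
    ∀ s : ℕ, ∀ A : Finset (Fin n),
      (∀ S : Finset (Fin n), S ⊆ A → (∀ u ∈ S, ∀ v ∈ S, u ≠ v → ¬ G.Adj u v) → S.card ≤ s) →
      (A.card : ℝ) ^ 2 ≤ s * ∑ v ∈ A, (((A ∩ G.neighborFinset v).card : ℝ) + 1) := by
  intro s
  induction s with
  | zero =>
    intro A hA
    have hAe : A = ∅ := by
      by_contra h
      obtain ⟨a, ha⟩ := Finset.nonempty_iff_ne_empty.2 h
      have h1 : ({a} : Finset (Fin n)) ⊆ A := Finset.singleton_subset_iff.2 ha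
      have h2 : ∀ u ∈ ({a} : Finset (Fin n)), ∀ v ∈ ({a} : Finset (Fin n)),
          u ≠ v → ¬ G.Adj u v := by simp
      have := hA {a} h1 h2
      simp at this
    simp [hAe]
  | succ s ih =>
    intro A hA
    rcases A.eq_empty_or_nonempty with rfl | hAne
    · simp
    obtain ⟨v, hv, hvmin⟩ := A.exists_min_image (fun x => (A ∩ G.neighborFinset x).card) hAne
    set C : Finset (Fin n) := insert v (A ∩ G.neighborFinset v) with hC
    set B : Finset (Fin n) := A \ C with hB
    have hCA : C ⊆ A := by
      intro x hx
      rcases Finset.mem_insert.1 hx with rfl | hx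
      · exact hv
      · exact (Finset.mem_inter.1 hx).1
    have hvC : v ∈ C := Finset.mem_insert_self _ _
    have hcardC : C.card = (A ∩ G.neighborFinset v).card + 1 := by
      rw [Finset.card_insert_of_notMem]
      simp
    have hcardA : B.card + C.card = A.card := Finset.card_sdiff_add_card_eq_card hCA
    have hBhyp : ∀ S : Finset (Fin n), S ⊆ B →
        (∀ u ∈ S, ∀ w ∈ S, u ≠ w → ¬ G.Adj u w) → S.card ≤ s := by
      intro S hSB hSind
      have hvS : v ∉ S := by
        intro h
        exact (Finset.mem_sdiff.1 (hSB h)).2 hvC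
      have h1 : insert v S ⊆ A := by
        intro x hx
        rcases Finset.mem_insert.1 hx with rfl | hx
        · exact hv
        · exact (Finset.mem_sdiff.1 (hSB hx)).1
      have hnadj : ∀ u ∈ S, ¬ G.Adj v u := by
        intro u hu hadj
        have hm := Finset.mem_sdiff.1 (hSB hu)
        exact hm.2 (Finset.mem_insert.2 (Or.inr (Finset.mem_inter.2
          ⟨hm.1, (SimpleGraph.mem_neighborFinset _ _ _).2 hadj⟩)))
      have h2 : ∀ u ∈ insert v S, ∀ w ∈ insert v S, u ≠ w → ¬ G.Adj u w := by
        intro u hu w hw hne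
        rcases Finset.mem_insert.1 hu with hu' | hu'
        · subst hu'
          rcases Finset.mem_insert.1 hw with hw' | hw'
          · exact absurd hw'.symm hne
          · exact hnadj w hw'
        · rcases Finset.mem_insert.1 hw with hw' | hw'
          · subst hw'
            intro hadj; exact hnadj u hu' hadj.symm
          · exact hSind u hu' w hw' hne
      have := hA (insert v S) h1 h2
      rwa [Finset.card_insert_of_notMem hvS, Nat.add_le_add_iff_right] at this
    have hIH := ih B hBhyp
    have hsplit : ∑ w ∈ A, (((A ∩ G.neighborFinset w).card : ℝ) + 1)
        = ∑ w ∈ C, (((A ∩ G.neighborFinset w).card : ℝ) + 1)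
          + ∑ w ∈ B, (((A ∩ G.neighborFinset w).card : ℝ) + 1) := by
      rw [hB, ← Finset.sum_sdiff hCA]
      ring
    set c : ℝ := ((A ∩ G.neighborFinset v).card : ℝ) + 1 with hc
    have hcpos : 0 < c := by positivity
    have hCsum : (C.card : ℝ) * c ≤ ∑ w ∈ C, (((A ∩ G.neighborFinset w).card : ℝ) + 1) := by
      have : ∀ w ∈ C, c ≤ ((A ∩ G.neighborFinset w).card : ℝ) + 1 := by
        intro w hw
        have := hvmin w (hCA hw)
        rw [hc]
        have : ((A ∩ G.neighborFinset v).card : ℝ) ≤ ((A ∩ G.neighborFinset w).card : ℝ) :=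
          Nat.cast_le.2 this
        linarith
      calc (C.card : ℝ) * c = ∑ _w ∈ C, c := by rw [Finset.sum_const, nsmul_eq_mul]
        _ ≤ _ := Finset.sum_le_sum this
    have hcc : (C.card : ℝ) = c := by rw [hcardC, hc]; push_cast; ring
    set Cs : ℝ := ∑ w ∈ C, (((A ∩ G.neighborFinset w).card : ℝ) + 1) with hCsdef
    set t : ℝ := ∑ w ∈ B, (((A ∩ G.neighborFinset w).card : ℝ) + 1) with ht
    have ht0 : 0 ≤ t := Finset.sum_nonneg fun w _ => by positivity
    have htB : ∑ w ∈ B, (((B ∩ G.neighborFinset w).card : ℝ) + 1) ≤ t := by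
      apply Finset.sum_le_sum
      intro w hw
      have : (B ∩ G.neighborFinset w).card ≤ (A ∩ G.neighborFinset w).card :=
        Finset.card_le_card (Finset.inter_subset_inter (Finset.sdiff_subset) le_rfl)
      exact_mod_cast Nat.add_le_add_right this 1
    have hst : ((B.card : ℝ)) ^ 2 ≤ s * t := by
      refine hIH.trans ?_
      exact mul_le_mul_of_nonneg_left htB (by positivity)
    set b : ℝ := (B.card : ℝ) with hb
    have hb0 : 0 ≤ b := by positivity
    have hAc : (A.card : ℝ) = b + c := by
      rw [hb, ← hcc, ← hcardA]; push_cast; ring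
    rw [hsplit, hAc]
    have hCs : c * c ≤ Cs := by rw [hcc] at hCsum; exact hCsum
    clear_value Cs t b c
    clear hsplit hCsum hcc hc hb ht hCsdef hvmin hBhyp hA ih htB hIH hAc hcardC hcardA
    rcases Nat.eq_zero_or_pos s with hs0 | hspos
    · subst hs0
      have hb2 : b ^ 2 ≤ 0 := by
        have := hst; push_cast at this; linarith
      have hb0' : b = 0 := by nlinarith [sq_nonneg b]
      have hcast : ((0 + 1 : ℕ) : ℝ) = 1 := by norm_num
      rw [hcast]
      nlinarith [hCs, ht0]
    · have hs1 : (1 : ℝ) ≤ (s : ℝ) := by exact_mod_cast hspos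
      have key2 : 2 * b * c ≤ (s : ℝ) * c ^ 2 + t := by
        nlinarith [sq_nonneg ((s : ℝ) * c - b), hst, hs1, hcpos, hb0]
      have hmono : ((s : ℝ) + 1) * (c * c + t) ≤ ((s : ℝ) + 1) * (Cs + t) :=
        mul_le_mul_of_nonneg_left (by linarith) (by linarith)
      have hcast : ((s + 1 : ℕ) : ℝ) = (s : ℝ) + 1 := by push_cast; ring
      rw [hcast]
      nlinarith [key2, hst, hmono]


lemma pair_count {n : ℕ} (G : SimpleGraph (Fin n)) [DecidableRel G.Adj] (u : Fin n) :
    ∑ v ∈ G.neighborFinset u, (G.neighborFinset u ∩ G.neighborFinset v).card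
      = 2 * ((G.cliqueFinset 3).filter (fun T => u ∈ T)).card := by
  classical
  set N := G.neighborFinset u with hN
  set P := (N ×ˢ N).filter (fun p => G.Adj p.1 p.2) with hP
  have hPmem : ∀ p : Fin n × Fin n, p ∈ P ↔ p.1 ∈ N ∧ p.2 ∈ N ∧ G.Adj p.1 p.2 := by
    intro p
    simp [hP, Finset.mem_filter, Finset.mem_product, and_assoc]
  -- Step 1 : P.card = LHS
  have h1 : P.card = ∑ v ∈ N, (N ∩ G.neighborFinset v).card := by
    rw [Finset.card_eq_sum_card_fiberwise (f := Prod.fst) (t := N)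
      (fun p hp => ((hPmem p).1 hp).1)]
    refine Finset.sum_congr rfl fun v hv => ?_
    have himg : P.filter (fun p => p.1 = v) = (N ∩ G.neighborFinset v).image (fun w => (v, w)) := by
      ext ⟨x, y⟩
      simp only [Finset.mem_filter, Finset.mem_image, Finset.mem_inter,
        SimpleGraph.mem_neighborFinset, hPmem, Prod.mk.injEq]
      constructor
      · rintro ⟨⟨hx, hy, hadj⟩, rfl⟩
        exact ⟨y, ⟨hy, hadj⟩, rfl, rfl⟩
      · rintro ⟨w, ⟨hw, hadj⟩, rfl, rfl⟩
        exact ⟨⟨hv, hw, hadj⟩, rfl⟩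
    rw [himg, Finset.card_image_of_injective _ (fun a b h => (Prod.ext_iff.1 h).2)]
  -- Step 2 : P.card = 2 * #triangles containing u
  have h2 : P.card = 2 * ((G.cliqueFinset 3).filter (fun T => u ∈ T)).card := by
    have hmap : ∀ p ∈ P, ({u, p.1, p.2} : Finset (Fin n)) ∈
        (G.cliqueFinset 3).filter (fun T => u ∈ T) := by
      intro p hp
      obtain ⟨hx, hy, hadj⟩ := (hPmem p).1 hp
      rw [Finset.mem_filter]
      refine ⟨SimpleGraph.mem_cliqueFinset_iff.2 (SimpleGraph.is3Clique_triple_iff.2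
        ⟨?_, ?_, hadj⟩), by simp⟩
      · exact (SimpleGraph.mem_neighborFinset _ _ _).1 hx
      · exact (SimpleGraph.mem_neighborFinset _ _ _).1 hy
    rw [Finset.card_eq_sum_card_fiberwise hmap]
    rw [Finset.sum_congr rfl (fun T hT => ?_), Finset.sum_const, smul_eq_mul, mul_comm]
    -- fiber card = 2
    rw [Finset.mem_filter] at hT
    obtain ⟨hTc, huT⟩ := hT
    have hT3 := SimpleGraph.mem_cliqueFinset_iff.1 hTc
    have herase : (T.erase u).card = 2 := by
      rw [Finset.card_erase_of_mem huT, hT3.2]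
    obtain ⟨a, b, hab, hTe⟩ := Finset.card_eq_two.1 herase
    have haT : a ∈ T := Finset.mem_of_mem_erase (hTe ▸ Finset.mem_insert_self _ _)
    have hbT : b ∈ T := Finset.mem_of_mem_erase
      (hTe ▸ Finset.mem_insert_of_mem (Finset.mem_singleton_self _))
    have hau : a ≠ u := (Finset.mem_erase.1 (hTe ▸ Finset.mem_insert_self a {b})).1
    have hbu : b ≠ u := (Finset.mem_erase.1
      (hTe ▸ Finset.mem_insert_of_mem (Finset.mem_singleton_self b))).1
    have hadjua : G.Adj u a := hT3.1 huT haT (Ne.symm hau)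
    have hadjub : G.Adj u b := hT3.1 huT hbT (Ne.symm hbu)
    have hadjab : G.Adj a b := hT3.1 haT hbT hab
    have hTeq : T = {u, a, b} := by
      rw [← Finset.insert_erase huT, hTe]
    have hfib : P.filter (fun p => ({u, p.1, p.2} : Finset (Fin n)) = T)
        = {(a, b), (b, a)} := by
      ext ⟨x, y⟩
      simp only [Finset.mem_filter, hPmem, Finset.mem_insert, Finset.mem_singleton,
        Prod.mk.injEq, SimpleGraph.mem_neighborFinset, hN]
      constructor
      · rintro ⟨⟨hx, hy, hadj⟩, hset⟩
        have hxT : x ∈ T := hset ▸ (by simp)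
        have hyT : y ∈ T := hset ▸ (by simp)
        have hxe : x ∈ T.erase u := Finset.mem_erase.2 ⟨hx.ne', hxT⟩
        have hye : y ∈ T.erase u := Finset.mem_erase.2 ⟨hy.ne', hyT⟩
        rw [hTe] at hxe hye
        simp only [Finset.mem_insert, Finset.mem_singleton] at hxe hye
        have hxy : x ≠ y := hadj.ne
        rcases hxe with rfl | rfl
        · rcases hye with rfl | rfl
          · exact absurd rfl hxy
          · exact Or.inl ⟨rfl, rfl⟩
        · rcases hye with rfl | rfl
          · exact Or.inr ⟨rfl, rfl⟩
          · exact absurd rfl hxy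
      · rintro (⟨rfl, rfl⟩ | ⟨rfl, rfl⟩)
        · exact ⟨⟨hadjua, hadjub, hadjab⟩, hTeq.symm⟩
        · refine ⟨⟨hadjub, hadjua, hadjab.symm⟩, ?_⟩
          rw [hTeq]
          ext z; simp; tauto
    rw [hfib]
    rw [Finset.card_insert_of_notMem (by simp [hab]), Finset.card_singleton]
  rw [← h1, h2]

lemma tri_sum {n : ℕ} (G : SimpleGraph (Fin n)) [DecidableRel G.Adj] :
    ∑ u : Fin n, ((G.cliqueFinset 3).filter (fun T => u ∈ T)).card
      = 3 * (G.cliqueFinset 3).card := by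
  classical
  simp_rw [Finset.card_filter]
  rw [Finset.sum_comm]
  have : ∀ T ∈ G.cliqueFinset 3, (∑ u : Fin n, if u ∈ T then 1 else 0) = 3 := by
    intro T hT
    have : (∑ u : Fin n, if u ∈ T then 1 else 0) = T.card := by
      rw [Finset.card_eq_sum_ones, Finset.sum_ite_mem, Finset.univ_inter]
    rw [this, (SimpleGraph.mem_cliqueFinset_iff.1 hT).2]
  rw [Finset.sum_congr rfl this, Finset.sum_const, smul_eq_mul, mul_comm]

theorem triangle_count_degree_sum_lower_bound {n s : ℕ} (hs : 1 ≤ s)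
    (G : SimpleGraph (Fin n)) [DecidableRel G.Adj] (hα : IndepNumLE G s) :
    3 * ((G.cliqueFinset 3).card : ℝ) ≥
      (∑ u : Fin n, (G.degree u : ℝ) ^ 2) / (2 * s) - (G.edgeFinset.card : ℝ) := by
  classical
  have hdeg : ∀ u : Fin n, (G.degree u : ℝ) ^ 2 ≤
      s * (2 * (((G.cliqueFinset 3).filter (fun T => u ∈ T)).card : ℝ) + G.degree u) := by
    intro u
    have hkey := turan_key G s (G.neighborFinset u) (fun S _ hind => hα S hind)
    have hsum : ∑ v ∈ G.neighborFinset u,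
        (((G.neighborFinset u ∩ G.neighborFinset v).card : ℝ) + 1)
        = 2 * (((G.cliqueFinset 3).filter (fun T => u ∈ T)).card : ℝ) + G.degree u := by
      rw [Finset.sum_add_distrib, Finset.sum_const, nsmul_eq_mul, mul_one]
      have : ∑ v ∈ G.neighborFinset u,
          ((G.neighborFinset u ∩ G.neighborFinset v).card : ℝ)
          = ((∑ v ∈ G.neighborFinset u,
              (G.neighborFinset u ∩ G.neighborFinset v).card : ℕ) : ℝ) := by
        push_cast; rfl
      rw [this, pair_count G u, SimpleGraph.card_neighborFinset_eq_degree]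
      push_cast; ring
    rw [hsum] at hkey
    simpa [SimpleGraph.card_neighborFinset_eq_degree] using hkey
  have hsum2 : (∑ u : Fin n, (G.degree u : ℝ) ^ 2) ≤
      s * (6 * ((G.cliqueFinset 3).card : ℝ) + 2 * (G.edgeFinset.card : ℝ)) := by
    calc (∑ u : Fin n, (G.degree u : ℝ) ^ 2)
        ≤ ∑ u : Fin n, (s : ℝ) * (2 * (((G.cliqueFinset 3).filter (fun T => u ∈ T)).card : ℝ)
            + G.degree u) := Finset.sum_le_sum fun u _ => hdeg u
      _ = s * (2 * ((∑ u : Fin n, ((G.cliqueFinset 3).filter (fun T => u ∈ T)).card : ℕ) : ℝ)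
            + ((∑ u : Fin n, G.degree u : ℕ) : ℝ)) := by
          rw [← Finset.mul_sum]
          push_cast
          rw [Finset.sum_add_distrib, Finset.mul_sum]
      _ = _ := by
          rw [tri_sum G, SimpleGraph.sum_degrees_eq_twice_card_edges]
          push_cast; ring
  have hspos : (0 : ℝ) < 2 * s := by
    have : (1 : ℝ) ≤ s := by exact_mod_cast hs
    linarith
  rw [ge_iff_le, sub_le_iff_le_add, div_le_iff₀ hspos]
  nlinarith [hsum2]
end

section
/- Let s ≥ 1 be an integer and let G be a simple graph on n vertices with m edges and independence number α(G) ≤ s. Then 3s³·t(G) ≥ m·(s(n−s) − s³), where t(G) is the number of triangles in G. -/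
/-!
Write `d_A(a)` for the number of neighbours of `a` inside a vertex set `A`. Repeatedly keeping a
vertex of minimum degree and discarding its closed neighbourhood gives the Caro–Wei bound: `A`
contains an independent set of size at least `∑_{a ∈ A} 1 / (d_A(a) + 1)`. Together with
Cauchy–Schwarz and `α(G) ≤ s` this yields `|A|² ≤ s ∑_{a ∈ A} (d_A(a) + 1)`.

For `A = V` this reads `n² ≤ s (2m + n)`. For `A = N(v)`, summed over `v`, it reads
`∑ d(v)² ≤ s (6t + 2m)`, because every triangle is seen six times as an ordered triple.
Cauchy–Schwarz once more gives `(2m)² ≤ n ∑ d(v)²`, and the bound follows by algebra.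
-/

open Finset SimpleGraph

namespace SimpleGraph

variable {V : Type*} (G : SimpleGraph V) [DecidableRel G.Adj]

theorem sum_degrees_eq_twice_card_edges_real [Fintype V] :
    ∑ v, (G.degree v : ℝ) = 2 * #G.edgeFinset := by
  exact_mod_cast G.sum_degrees_eq_twice_card_edges

variable [DecidableEq V]

lemma sum_one_div_card_adj_add_one_insert_le_one {A : Finset V} {x : V}
    (hmin : ∀ a ∈ A, #{b ∈ A | G.Adj x b} ≤ #{b ∈ A | G.Adj a b}) :
    ∑ a ∈ insert x {b ∈ A | G.Adj x b}, (1 : ℝ) / (#{b ∈ A | G.Adj a b} + 1) ≤ 1 := by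
  have hcard : (#(insert x {b ∈ A | G.Adj x b}) : ℝ) = #{b ∈ A | G.Adj x b} + 1 := by
    rw [card_insert_of_notMem (by simp), Nat.cast_succ]
  calc ∑ a ∈ insert x {b ∈ A | G.Adj x b}, (1 : ℝ) / (#{b ∈ A | G.Adj a b} + 1)
      ≤ ∑ _a ∈ insert x {b ∈ A | G.Adj x b}, (1 : ℝ) / (#{b ∈ A | G.Adj x b} + 1) := by
        refine sum_le_sum fun a ha => one_div_le_one_div_of_le (by positivity) ?_
        rcases mem_insert.1 ha with rfl | ha
        · exact le_rfl
        · exact_mod_cast Nat.add_le_add_right (hmin a (mem_filter.1 ha).1) 1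
    _ = 1 := by
        rw [sum_const, nsmul_eq_mul, hcard]
        field_simp

theorem exists_isIndepSet_subset_sum_one_div_le (A : Finset V) :
    ∃ I ⊆ A, G.IsIndepSet I ∧ ∑ a ∈ A, (1 : ℝ) / (#{b ∈ A | G.Adj a b} + 1) ≤ #I := by
  induction A using Finset.strongInduction with
  | _ A ih =>
    rcases A.eq_empty_or_nonempty with rfl | hne
    · exact ⟨∅, by simp⟩
    obtain ⟨x, hxA, hmin⟩ := A.exists_min_image (fun a => #{b ∈ A | G.Adj a b}) hne
    set C := insert x {b ∈ A | G.Adj x b}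
    have hCA : C ⊆ A := insert_subset hxA (filter_subset _ _)
    obtain ⟨I, hIA, hI, hIsum⟩ := ih (A \ C) (sdiff_ssubset hCA ⟨x, mem_insert_self _ _⟩)
    have hxI : ∀ a ∈ I, a ≠ x ∧ ¬ G.Adj x a := fun a ha => by
      obtain ⟨haA, haC⟩ := mem_sdiff.1 (hIA ha)
      simp only [C, mem_insert, mem_filter, not_or, not_and] at haC
      exact ⟨haC.1, haC.2 haA⟩
    refine ⟨insert x I, insert_subset hxA (hIA.trans sdiff_subset), ?_, ?_⟩
    · rw [coe_insert, isIndepSet_iff, Set.pairwise_insert]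
      exact ⟨hI, fun a ha _ => ⟨(hxI a ha).2, fun h => (hxI a ha).2 h.symm⟩⟩
    · have hdiff : ∑ a ∈ A \ C, (1 : ℝ) / (#{b ∈ A | G.Adj a b} + 1)
          ≤ ∑ a ∈ A \ C, (1 : ℝ) / (#{b ∈ A \ C | G.Adj a b} + 1) := by
        gcongr
        exact sdiff_subset
      rw [← sum_sdiff hCA, card_insert_of_notMem fun h => (hxI x h).1 rfl, Nat.cast_succ]
      linarith [G.sum_one_div_card_adj_add_one_insert_le_one hmin]

theorem sum_card_adj_neighborFinset_le [Fintype V] :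
    ∑ v, ∑ a ∈ G.neighborFinset v, #{b ∈ G.neighborFinset v | G.Adj a b}
      ≤ 6 * #(G.cliqueFinset 3) := by
  set T : Finset (V × V × V) := {p | G.Adj p.1 p.2.1 ∧ G.Adj p.1 p.2.2 ∧ G.Adj p.2.1 p.2.2}
  have hT : ∑ v, ∑ a ∈ G.neighborFinset v, #{b ∈ G.neighborFinset v | G.Adj a b} = #T := by
    simp only [T, card_filter, Fintype.sum_prod_type, neighborFinset_eq_filter, sum_filter,
      filter_filter]
    refine sum_congr rfl fun v _ => sum_congr rfl fun a _ => ?_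
    by_cases hva : G.Adj v a <;> simp [hva]
  rw [hT]
  refine card_le_mul_card_image_of_maps_to (f := fun p => {p.1, p.2.1, p.2.2}) ?_ 6 ?_
  · rintro ⟨u, v, w⟩ hp
    simp only [T, mem_filter, mem_univ, true_and] at hp
    exact mem_cliqueFinset_iff.2 (is3Clique_triple_iff.2 hp)
  -- An ordered triangle is determined by its first two vertices, which are distinct.
  · intro S hS
    calc #{p ∈ T | {p.1, p.2.1, p.2.2} = S} ≤ #S.offDiag := by
          refine card_le_card_of_injOn (fun p => (p.1, p.2.1)) ?_ ?_
          · intro p hp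
            simp only [T, mem_coe, mem_filter, mem_univ, true_and] at hp
            obtain ⟨⟨huv, -, -⟩, rfl⟩ := hp
            simp [huv.ne]
          · rintro ⟨u, v, w⟩ hp ⟨u', v', w'⟩ hq hpq
            simp only [T, mem_coe, mem_filter, mem_univ, true_and] at hp hq
            obtain ⟨rfl, rfl⟩ := Prod.mk.inj hpq
            obtain ⟨⟨-, huw, hvw⟩, hS⟩ := hp
            obtain ⟨-, rfl⟩ := hq
            have : w ∈ ({u, v, w'} : Finset V) := hS ▸ by simp
            simp only [mem_insert, mem_singleton] at this
            rcases this with rfl | rfl | rfl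
            · exact absurd huw G.irrefl
            · exact absurd hvw G.irrefl
            · rfl
      _ = 6 := by simp [offDiag_card, (mem_cliqueFinset_iff.1 hS).card_eq]

variable {G} {s : ℕ}

theorem card_sq_le_mul_sum_card_adj_add_one (hα : IndepNumLE G s) (A : Finset V) :
    (#A : ℝ) ^ 2 ≤ s * ∑ a ∈ A, ((#{b ∈ A | G.Adj a b} : ℝ) + 1) := by
  obtain ⟨I, -, hI, hIsum⟩ := G.exists_isIndepSet_subset_sum_one_div_le A
  have hcs : (#A : ℝ) ^ 2 ≤ (∑ a ∈ A, (1 : ℝ) / (#{b ∈ A | G.Adj a b} + 1)) *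
      ∑ a ∈ A, ((#{b ∈ A | G.Adj a b} : ℝ) + 1) := by
    simpa using sum_sq_le_sum_mul_sum_of_sq_le_mul A (r := fun _ => (1 : ℝ))
      (fun a _ => by positivity) (fun a _ => by positivity)
      (fun a _ => by field_simp; rfl)
  calc (#A : ℝ) ^ 2 ≤ _ := hcs
    _ ≤ s * ∑ a ∈ A, ((#{b ∈ A | G.Adj a b} : ℝ) + 1) := by
        gcongr
        exact hIsum.trans (mod_cast hα I hI)

variable [Fintype V]

theorem card_sq_le_mul_two_mul_card_edgeFinset_add_card (hα : IndepNumLE G s) :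
    (Fintype.card V : ℝ) ^ 2 ≤ s * (2 * #G.edgeFinset + Fintype.card V) := by
  have h := card_sq_le_mul_sum_card_adj_add_one hα univ
  simp only [sum_add_distrib, ← neighborFinset_eq_filter, card_neighborFinset_eq_degree,
    sum_degrees_eq_twice_card_edges_real, card_univ] at h
  simpa using h

theorem sum_degree_sq_le_mul (hα : IndepNumLE G s) :
    ∑ v, (G.degree v : ℝ) ^ 2 ≤ s * (6 * #(G.cliqueFinset 3) + 2 * #G.edgeFinset) := by
  have hv (v : V) : (G.degree v : ℝ) ^ 2 ≤ s * (∑ a ∈ G.neighborFinset v,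
      (#{b ∈ G.neighborFinset v | G.Adj a b} : ℝ) + G.degree v) := by
    simpa [sum_add_distrib] using card_sq_le_mul_sum_card_adj_add_one hα (G.neighborFinset v)
  have htri : ∑ v, ∑ a ∈ G.neighborFinset v, (#{b ∈ G.neighborFinset v | G.Adj a b} : ℝ)
      ≤ 6 * #(G.cliqueFinset 3) := by
    exact_mod_cast G.sum_card_adj_neighborFinset_le
  calc ∑ v, (G.degree v : ℝ) ^ 2
      ≤ ∑ v, s * (∑ a ∈ G.neighborFinset v,
          (#{b ∈ G.neighborFinset v | G.Adj a b} : ℝ) + G.degree v) := sum_le_sum fun v _ => hv v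
    _ ≤ s * (6 * #(G.cliqueFinset 3) + 2 * #G.edgeFinset) := by
      rw [← mul_sum, sum_add_distrib, G.sum_degrees_eq_twice_card_edges_real]
      gcongr

end SimpleGraph

theorem triangle_count_edges_lower_bound_general {n s : ℕ}
    (G : SimpleGraph (Fin n)) [DecidableRel G.Adj] (hα : IndepNumLE G s) :
    3 * (s : ℝ) ^ 3 * ((G.cliqueFinset 3).card : ℝ) ≥
      (G.edgeFinset.card : ℝ) * ((s : ℝ) * ((n : ℝ) - s) - (s : ℝ) ^ 3) := by
  set m : ℝ := (G.edgeFinset.card : ℝ)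
  set t : ℝ := ((G.cliqueFinset 3).card : ℝ)
  have hV : (n : ℝ) ^ 2 ≤ s * (2 * m + n) := by
    simpa using card_sq_le_mul_two_mul_card_edgeFinset_add_card hα
  have hdeg : (2 * m) ^ 2 ≤ n * (s * (6 * t + 2 * m)) := by
    have hcs := sq_sum_le_card_mul_sum_sq (s := univ) (f := fun v => (G.degree v : ℝ))
    rw [G.sum_degrees_eq_twice_card_edges_real, card_univ, Fintype.card_fin] at hcs
    exact hcs.trans (by gcongr; exact sum_degree_sq_le_mul hα)
  rcases (Nat.cast_nonneg (α := ℝ) n).eq_or_lt with hn | hn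
  · have hm0 : m = 0 := by rw [← hn] at hdeg; nlinarith
    rw [hm0, zero_mul]
    positivity
  -- `n (n - s) ≤ 2 m s` from `hV`, then multiply by `2 m` and compare with `s * hdeg`.
  have key : 2 * m * (n - s) ≤ s ^ 2 * (6 * t + 2 * m) := by
    refine le_of_mul_le_mul_left ?_ hn
    nlinarith [mul_le_mul_of_nonneg_left (show (n : ℝ) * (n - s) ≤ 2 * m * s by linarith)
      (by positivity : (0 : ℝ) ≤ 2 * m), mul_le_mul_of_nonneg_left hdeg (Nat.cast_nonneg s)]
  nlinarith [mul_le_mul_of_nonneg_left key (Nat.cast_nonneg (α := ℝ) s)]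

theorem triangle_count_edges_lower_bound {n s : ℕ} (hs : 1 ≤ s)
    (G : SimpleGraph (Fin n)) [DecidableRel G.Adj] (hα : IndepNumLE G s) :
    3 * (s : ℝ) ^ 3 * ((G.cliqueFinset 3).card : ℝ) ≥
      (G.edgeFinset.card : ℝ) * ((s : ℝ) * ((n : ℝ) - s) - (s : ℝ) ^ 3) :=
  triangle_count_edges_lower_bound_general G hα
end
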